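/- arXiv:2405.07713 — 7 statements merged into one kernel-verified Lean document; each statement's English description precedes it below -/
import Mathlib

section
/- If a sequence (Xₙ) in L⁰(ℝ, F_T) converges to X in probability, then (Xₙ) converges to X with respect to the pseudo-distance d⁺(X,Y) = E[(X−Y)⁺ ∧ 1], and the set of all limits of (Xₙ) with respect to d⁺ is exactly L⁰((−∞, X], F_T) = {Z ∈ L⁰(ℝ, F_T) : Z ≤ X a.s.}. -/
open MeasureTheory Filter

/-- The pseudo-distance `d⁺(X,Y) = E[(X−Y)⁺ ∧ 1]`. -/
noncomputable def dplus {Ω : Type*} [MeasurableSpace Ω] (μ : Measure Ω)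
    (X Y : Ω → ℝ) : ℝ :=
  ∫ ω, min (max (X ω - Y ω) 0) 1 ∂μ

private lemma phi_nonneg (a : ℝ) : 0 ≤ min (max a 0) 1 :=
  le_min (le_max_right _ _) zero_le_one

private lemma phi_le_one (a : ℝ) : min (max a 0) 1 ≤ 1 := min_le_right _ _

private lemma phi_lip (a b : ℝ) : |min (max a 0) 1 - min (max b 0) 1| ≤ min |a - b| 1 := by
  refine le_min ?_ ?_
  · calc |min (max a 0) 1 - min (max b 0) 1| ≤ max |max a 0 - max b 0| |1 - 1| :=
        abs_min_sub_min_le_max _ _ _ _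
    _ ≤ |a - b| := by
        simpa using max_le ((abs_max_sub_max_le_abs a b 0)) (abs_nonneg (a - b))
  · rw [abs_le]
    constructor
    · have := phi_nonneg a; have := phi_le_one b; linarith
    · have := phi_le_one a; have := phi_nonneg b; linarith

private lemma phi_eq_zero_iff (a : ℝ) : min (max a 0) 1 = 0 ↔ a ≤ 0 := by
  constructor
  · intro hz
    by_contra hlt
    push_neg at hlt
    have h1 : 0 < max a 0 := lt_max_of_lt_left hlt
    have : 0 < min (max a 0) 1 := lt_min h1 zero_lt_one
    linarith
  · intro ha
    rw [max_eq_right ha, min_eq_left zero_le_one]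

private lemma integrable_phi {Ω : Type*} {m0 : MeasurableSpace Ω}
    (μ : Measure Ω) [IsProbabilityMeasure μ] {f : Ω → ℝ} (hf : Measurable f) :
    Integrable (fun ω => min (max (f ω) 0) 1) μ := by
  refine Integrable.mono' (integrable_const 1) ((hf.max measurable_const).min
    measurable_const).aestronglyMeasurable ?_
  filter_upwards with ω
  rw [Real.norm_eq_abs, abs_of_nonneg (phi_nonneg _)]
  exact phi_le_one _

private lemma integrable_minabs {Ω : Type*} {m0 : MeasurableSpace Ω}
    (μ : Measure Ω) [IsProbabilityMeasure μ] {f : Ω → ℝ} (hf : Measurable f) :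
    Integrable (fun ω => min |f ω| 1) μ := by
  refine Integrable.mono' (integrable_const 1) ((hf.abs.min
    measurable_const)).aestronglyMeasurable ?_
  filter_upwards with ω
  rw [Real.norm_eq_abs, abs_of_nonneg (le_min (abs_nonneg _) zero_le_one)]
  exact min_le_right _ _

private lemma key_tendsto {Ω : Type*} {m0 : MeasurableSpace Ω}
    (μ : Measure Ω) [IsProbabilityMeasure μ]
    (X : Ω → ℝ) (Xn : ℕ → Ω → ℝ)
    (hX : Measurable X) (hXn : ∀ n, Measurable (Xn n))
    (h : TendstoInMeasure μ Xn atTop X) :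
    Tendsto (fun n => ∫ ω, min |Xn n ω - X ω| 1 ∂μ) atTop (nhds 0) := by
  rw [Metric.tendsto_atTop]
  intro ε hε
  set ε' : ℝ := ε / 2 with hε'
  have hε'pos : 0 < ε' := by positivity
  have htm := tendstoInMeasure_iff_dist.mp h ε' hε'pos
  have h2 : Tendsto (fun n => (μ {x | ε' ≤ dist (Xn n x) (X x)}).toReal) atTop (nhds 0) := by
    simpa [Function.comp_def] using (ENNReal.tendsto_toReal (by simp)).comp htm
  rw [Metric.tendsto_atTop] at h2
  obtain ⟨N, hN⟩ := h2 ε' hε'pos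
  refine ⟨N, fun n hn => ?_⟩
  have hNn := hN n hn
  rw [Real.dist_eq, sub_zero, abs_of_nonneg ENNReal.toReal_nonneg] at hNn
  rw [Real.dist_eq, sub_zero,
    abs_of_nonneg (integral_nonneg fun ω => le_min (abs_nonneg _) zero_le_one)]
  · set s : Set Ω := {x | ε' ≤ dist (Xn n x) (X x)} with hs
    have hsm : MeasurableSet s := measurableSet_le measurable_const ((hXn n).dist hX)
    have hbound : ∀ ω, min |Xn n ω - X ω| 1 ≤ ε' + s.indicator (fun _ => (1:ℝ)) ω := by
      intro ω
      by_cases hω : ω ∈ s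
      · rw [Set.indicator_of_mem hω]
        have := min_le_right |Xn n ω - X ω| 1
        linarith [hε'pos.le]
      · rw [Set.indicator_of_notMem hω]
        simp only [hs, Set.mem_setOf_eq, not_le] at hω
        rw [Real.dist_eq] at hω
        have := min_le_left |Xn n ω - X ω| 1
        linarith
    have hint : (∫ ω, min |Xn n ω - X ω| 1 ∂μ)
        ≤ ∫ ω, (ε' + s.indicator (fun _ => (1:ℝ)) ω) ∂μ := by
      refine integral_mono (integrable_minabs μ ((hXn n).sub hX)) ?_ hbound
      exact (integrable_const ε').add ((integrable_const 1).indicator hsm)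
    rw [integral_add (integrable_const ε') ((integrable_const 1).indicator hsm),
      integral_const, integral_indicator_const (1:ℝ) hsm] at hint
    simp only [measure_univ, probReal_univ, ENNReal.toReal_one, one_smul, smul_eq_mul, mul_one, one_mul] at hint
    calc (∫ ω, min |Xn n ω - X ω| 1 ∂μ) ≤ ε' + (μ s).toReal := hint
      _ < ε' + ε' := by linarith
      _ = ε := by rw [hε']; ring

private lemma dplus_tendsto {Ω : Type*} {m0 : MeasurableSpace Ω}
    (μ : Measure Ω) [IsProbabilityMeasure μ]
    (X : Ω → ℝ) (Xn : ℕ → Ω → ℝ) (Z : Ω → ℝ)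
    (hX : Measurable X) (hXn : ∀ n, Measurable (Xn n)) (hZ : Measurable Z)
    (h : TendstoInMeasure μ Xn atTop X) :
    Tendsto (fun n => dplus μ Z (Xn n)) atTop (nhds (dplus μ Z X)) := by
  rw [tendsto_iff_dist_tendsto_zero]
  refine squeeze_zero (fun n => dist_nonneg)
    (g := fun n => ∫ ω, min |Xn n ω - X ω| 1 ∂μ) (fun n => ?_)
    (key_tendsto μ X Xn hX hXn h)
  rw [Real.dist_eq, dplus, dplus,
    ← integral_sub (integrable_phi μ (f := fun ω => Z ω - Xn n ω) (hZ.sub (hXn n))) (integrable_phi μ (f := fun ω => Z ω - X ω) (hZ.sub hX))]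
  calc |∫ ω, (min (max (Z ω - Xn n ω) 0) 1 - min (max (Z ω - X ω) 0) 1) ∂μ|
      ≤ ∫ ω, |min (max (Z ω - Xn n ω) 0) 1 - min (max (Z ω - X ω) 0) 1| ∂μ :=
        by
          simpa [Real.norm_eq_abs] using norm_integral_le_integral_norm
            (fun ω => min (max (Z ω - Xn n ω) 0) 1 - min (max (Z ω - X ω) 0) 1) (μ := μ)
    _ ≤ ∫ ω, min |Xn n ω - X ω| 1 ∂μ := by
        refine integral_mono ?_ (integrable_minabs μ ((hXn n).sub hX)) (fun ω => ?_)
        · exact ((integrable_phi μ (hZ.sub (hXn n))).sub (integrable_phi μ (hZ.sub hX))).abs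
        · have := phi_lip (Z ω - Xn n ω) (Z ω - X ω)
          have heq : (Z ω - Xn n ω) - (Z ω - X ω) = -(Xn n ω - X ω) := by ring
          rwa [heq, abs_neg] at this

/-- If `Xₙ → X` in probability, then `Xₙ → X` w.r.t. the
pseudo-distance `d⁺(X,Y) = E[(X−Y)⁺ ∧ 1]`, and the set of all limits of
`(Xₙ)` w.r.t. `d⁺` is exactly `{Z ∈ L⁰ : Z ≤ X a.s.}`. -/
theorem limits_of_tendstoInMeasure_for_dplus {Ω : Type*} {m0 : MeasurableSpace Ω}
    (μ : Measure Ω) [IsProbabilityMeasure μ]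
    (X : Ω → ℝ) (Xn : ℕ → Ω → ℝ)
    (hX : Measurable X) (hXn : ∀ n, Measurable (Xn n))
    (h : TendstoInMeasure μ Xn atTop X) :
    Tendsto (fun n => dplus μ X (Xn n)) atTop (nhds 0) ∧
    ∀ Z : Ω → ℝ, Measurable Z →
      (Tendsto (fun n => dplus μ Z (Xn n)) atTop (nhds 0) ↔ ∀ᵐ ω ∂μ, Z ω ≤ X ω) := by
  have hzero : ∀ Z : Ω → ℝ, Measurable Z → (dplus μ Z X = 0 ↔ ∀ᵐ ω ∂μ, Z ω ≤ X ω) := by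
    intro Z hZ
    rw [dplus, integral_eq_zero_iff_of_nonneg (fun ω => phi_nonneg _)
      (integrable_phi μ (f := fun ω => Z ω - X ω) (hZ.sub hX))]
    constructor
    · intro hae
      filter_upwards [hae] with ω hω
      have := (phi_eq_zero_iff (Z ω - X ω)).mp hω
      linarith
    · intro hae
      filter_upwards [hae] with ω hω
      exact (phi_eq_zero_iff (Z ω - X ω)).mpr (by linarith)
  constructor
  · have := dplus_tendsto μ X Xn X hX hXn hX h
    have hXX : dplus μ X X = 0 := by
      simp [dplus]
    rwa [hXX] at this
  · intro Z hZ
    have hkey := dplus_tendsto μ X Xn Z hX hXn hZ h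
    rw [← hzero Z hZ]
    constructor
    · intro h0
      exact tendsto_nhds_unique hkey h0
    · intro h0
      rwa [h0] at hkey
end

section
/- Let X = (Xₙ) be a sequence in L⁰(ℝ, F_T) that converges with respect to the pseudo-distance d⁺(X,Y) = E[(X−Y)⁺ ∧ 1]. Then the set of all limits of (Xₙ) coincides with the family of all X_∞ ∈ L⁰(ℝ, F_T) such that X_∞ ≤ infₙ (Xₙ + αₙ) a.s. for some sequence (αₙ) of nonnegative random variables converging to 0 in probability. -/
open MeasureTheory Filter

/-- If `(Xₙ)` converges w.r.t. `d⁺(X,Y) = E[(X−Y)⁺ ∧ 1]`, then the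
set of its limits coincides with the family of all `X_∞` such that
`X_∞ ≤ infₙ (Xₙ + αₙ)` a.s. for some sequence `(αₙ)` of nonnegative random
variables converging to `0` in probability. -/
theorem dplus_limit_set_characterization {Ω : Type*} {m0 : MeasurableSpace Ω}
    (μ : Measure Ω) [IsProbabilityMeasure μ]
    (Xn : ℕ → Ω → ℝ) (hXn : ∀ n, Measurable (Xn n))
    (hconv : ∃ Z : Ω → ℝ, Measurable Z ∧
      Tendsto (fun n => dplus μ Z (Xn n)) atTop (nhds 0)) :
    ∀ Xinf : Ω → ℝ, Measurable Xinf →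
      (Tendsto (fun n => dplus μ Xinf (Xn n)) atTop (nhds 0) ↔
        ∃ α : ℕ → Ω → ℝ, (∀ n, Measurable (α n)) ∧ (∀ n ω, 0 ≤ α n ω) ∧
          TendstoInMeasure μ α atTop 0 ∧
          ∀ n, ∀ᵐ ω ∂μ, Xinf ω ≤ Xn n ω + α n ω) := by
  intro Xinf hXinf
  set β : ℕ → Ω → ℝ := fun n ω => min (max (Xinf ω - Xn n ω) 0) 1 with hβdef
  have hβmeas : ∀ n, Measurable (β n) := fun n =>
    ((hXinf.sub (hXn n)).max measurable_const).min measurable_const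
  have hβ0 : ∀ n ω, 0 ≤ β n ω := fun n ω => le_min (le_max_right _ _) zero_le_one
  have hβ1 : ∀ n ω, β n ω ≤ 1 := fun n ω => min_le_right _ _
  have hβint : ∀ n, Integrable (β n) μ := fun n =>
    (integrable_const 1).mono' (hβmeas n).aestronglyMeasurable
      (ae_of_all _ fun ω => by
        rw [Real.norm_eq_abs, abs_of_nonneg (hβ0 n ω)]; exact hβ1 n ω)
  have hdp : ∀ n, dplus μ Xinf (Xn n) = ∫ ω, β n ω ∂μ := fun n => rfl
  constructor
  · intro h
    refine ⟨fun n ω => max (Xinf ω - Xn n ω) 0,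
      fun n => (hXinf.sub (hXn n)).max measurable_const,
      fun n ω => le_max_right _ _, ?_, fun n => ae_of_all _ fun ω => by
        have := le_max_left (Xinf ω - Xn n ω) 0; linarith⟩
    rw [tendstoInMeasure_iff_dist]
    intro ε hε
    have hδ : (0:ℝ) < min ε 1 := lt_min hε one_pos
    -- bound `(μ s n).toReal` by `(∫ β n) / min ε 1` via Markov
    have hbound : ∀ n,
        (μ {x | ε ≤ dist (max (Xinf x - Xn n x) 0) (0 : ℝ)}).toReal
          ≤ (∫ ω, β n ω ∂μ) / min ε 1 := by
      intro n
      have hsub : {x | ε ≤ dist (max (Xinf x - Xn n x) 0) (0 : ℝ)}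
          ⊆ {x | min ε 1 ≤ β n x} := by
        intro x hx
        simp only [Set.mem_setOf_eq, Real.dist_eq, sub_zero,
          abs_of_nonneg (le_max_right (Xinf x - Xn n x) 0)] at hx
        exact min_le_min hx le_rfl
      have hmono : (μ {x | ε ≤ dist (max (Xinf x - Xn n x) 0) (0 : ℝ)}).toReal
          ≤ (μ {x | min ε 1 ≤ β n x}).toReal := by
        apply ENNReal.toReal_mono (measure_ne_top _ _) (measure_mono hsub)
      have hmar := mul_meas_ge_le_integral_of_nonneg
        (ae_of_all μ (hβ0 n)) (hβint n) (min ε 1)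
      calc (μ {x | ε ≤ dist (max (Xinf x - Xn n x) 0) (0 : ℝ)}).toReal
          ≤ (μ {x | min ε 1 ≤ β n x}).toReal := hmono
        _ ≤ (∫ ω, β n ω ∂μ) / min ε 1 := by
            rw [le_div_iff₀ hδ, mul_comm]; exact hmar
    have htoReal : Tendsto
        (fun n => (μ {x | ε ≤ dist (max (Xinf x - Xn n x) 0) ((0 : Ω → ℝ) x)}).toReal)
        atTop (nhds 0) := by
      have hub : Tendsto (fun n => (∫ ω, β n ω ∂μ) / min ε 1) atTop (nhds 0) := by
        have := (h.div_const (min ε 1))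
        simpa [hdp, zero_div] using this
      refine tendsto_of_tendsto_of_tendsto_of_le_of_le tendsto_const_nhds hub
        (fun n => ENNReal.toReal_nonneg) (fun n => ?_)
      simpa using hbound n
    have hne : ∀ n, μ {x | ε ≤ dist (max (Xinf x - Xn n x) 0) ((0 : Ω → ℝ) x)} ≠ ⊤ :=
      fun n => measure_ne_top _ _
    have := (ENNReal.tendsto_toReal_iff (x := 0) hne ENNReal.zero_ne_top).mp
      (by simpa using htoReal)
    simpa using this
  · rintro ⟨α, hαmeas, hα0, hαtm, hαle⟩
    rw [Metric.tendsto_atTop]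
    intro δ hδ
    have h2 : (0:ℝ) < δ / 2 := by linarith
    have hmeas := (tendstoInMeasure_iff_dist.mp hαtm) (δ/2) h2
    have hev : ∀ᶠ n in atTop,
        μ {x | δ/2 ≤ dist (α n x) ((0 : Ω → ℝ) x)} < ENNReal.ofReal (δ/2) := by
      exact hmeas (ENNReal.nhds_zero_basis.mem_of_mem (by simp [h2]))
    rw [eventually_atTop] at hev
    obtain ⟨N, hN⟩ := hev
    refine ⟨N, fun n hn => ?_⟩
    set s : Set Ω := {x | δ/2 ≤ dist (α n x) ((0 : Ω → ℝ) x)} with hs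
    have hsmeas : MeasurableSet s := by
      have : s = {x | δ/2 ≤ |α n x|} := by
        ext x; simp [hs, Real.dist_eq]
      rw [this]
      exact measurableSet_le measurable_const (hαmeas n).abs
    have hind_int : Integrable (fun ω => s.indicator (fun _ => (1:ℝ)) ω + δ/2) μ := by
      exact ((integrable_const (1:ℝ)).indicator hsmeas).add (integrable_const _)
    have hptwise : ∀ᵐ ω ∂μ, β n ω ≤ s.indicator (fun _ => (1:ℝ)) ω + δ/2 := by
      filter_upwards [hαle n] with ω hω
      by_cases hωs : ω ∈ s
      · rw [Set.indicator_of_mem hωs]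
        have := hβ1 n ω; linarith
      · rw [Set.indicator_of_notMem hωs]
        have hlt : dist (α n ω) 0 < δ/2 := not_le.mp hωs
        rw [Real.dist_eq, sub_zero, abs_of_nonneg (hα0 n ω)] at hlt
        have h1 : max (Xinf ω - Xn n ω) 0 ≤ α n ω :=
          max_le (by linarith) (hα0 n ω)
        have h2 : β n ω ≤ α n ω := le_trans (min_le_left _ _) h1
        linarith
    have hint_le : ∫ ω, β n ω ∂μ ≤ (μ s).toReal + δ/2 := by
      have := integral_mono_ae (hβint n) hind_int hptwise
      rwa [integral_add ((integrable_const (1:ℝ)).indicator hsmeas) (integrable_const _),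
        integral_indicator_const _ hsmeas, integral_const, probReal_univ,
        smul_eq_mul, mul_one, one_smul, measureReal_def] at this
    have hμlt : (μ s).toReal < δ/2 := by
      have := hN n hn
      have h' : (μ s).toReal < (ENNReal.ofReal (δ/2)).toReal :=
        ENNReal.toReal_strict_mono ENNReal.ofReal_ne_top this
      rwa [ENNReal.toReal_ofReal h2.le] at h'
    have hnn : 0 ≤ ∫ ω, β n ω ∂μ := integral_nonneg (hβ0 n)
    rw [hdp, Real.dist_eq, sub_zero, abs_of_nonneg hnn]
    linarith
end

section
/- Let (Xₙ) and (Yₙ) be sequences in L⁰(ℝ, F_T) both converging to X and Y respectively with respect to the pseudo-distance d̂_t⁺(X,Y) = E[esssup_{F_t}((X−Y)⁺) ∧ 1]. Then for any nonnegative F_t-measurable random variable α_t, the sequence (α_t Xₙ) converges to α_t X with respect to d̂_t⁺. -/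
open MeasureTheory Filter

/-- `Y` is the `m`-conditional essential supremum of `X` under `μ`. -/
def IsCondEssSup {Ω : Type*} {mΩ : MeasurableSpace Ω} (m : MeasurableSpace Ω)
    (μ : @MeasureTheory.Measure Ω mΩ) (X Y : Ω → ℝ) : Prop :=
  Measurable[m] Y ∧ (∀ᵐ ω ∂μ, X ω ≤ Y ω) ∧
    ∀ Z : Ω → ℝ, Measurable[m] Z → (∀ᵐ ω ∂μ, X ω ≤ Z ω) → ∀ᵐ ω ∂μ, Y ω ≤ Z ω

/-- The pseudo-distance `d̂_t⁺(X,Y) = E[esssup_{F_t}((X−Y)⁺) ∧ 1]`, the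
conditional essential supremum being computed through an assignment `es`
(note `esssup((X−Y)⁺) ∧ 1 = esssup((X−Y)⁺ ∧ 1) ∧ 1` a.s.). -/
noncomputable def dhat {Ω : Type*} {mΩ : MeasurableSpace Ω} (μ : @MeasureTheory.Measure Ω mΩ)
    (es : (Ω → ℝ) → Ω → ℝ) (X Y : Ω → ℝ) : ℝ :=
  ∫ ω, min (es (fun ω' => min (max (X ω' - Y ω') 0) 1) ω) 1 ∂μ

/-- Pointwise key inequality: `(a·x)⁺ ∧ 1 ≤ max a 1 · (x⁺ ∧ 1)` for `a ≥ 0`. -/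
lemma aux_min_max_mul (a x : ℝ) (ha : 0 ≤ a) :
    min (max (a * x) 0) 1 ≤ max a 1 * min (max x 0) 1 := by
  have hmm : max (a * x) 0 = a * max x 0 := by
    rw [mul_max_of_nonneg _ _ ha, mul_zero]
  rw [hmm]
  have hd : (0 : ℝ) ≤ max x 0 := le_max_right _ _
  rcases le_or_gt (max x 0) 1 with h | h
  · rw [min_eq_left h]
    calc min (a * max x 0) 1 ≤ a * max x 0 := min_le_left _ _
      _ ≤ max a 1 * max x 0 := mul_le_mul_of_nonneg_right (le_max_left _ _) hd
  · rw [min_eq_right h.le]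
    calc min (a * max x 0) 1 ≤ 1 := min_le_right _ _
      _ ≤ max a 1 * 1 := by
          rw [mul_one]; exact le_max_right _ _

/-- Auxiliary: integrability and value of the integral of an indicator. -/
lemma aux_indicator_int {Ω : Type*} {m0 : MeasurableSpace Ω} (μ : Measure Ω)
    [IsFiniteMeasure μ] {s : Set Ω} (hs : MeasurableSet s) :
    Integrable (s.indicator (fun _ => (1 : ℝ))) μ ∧
      ∫ ω, s.indicator (fun _ => (1 : ℝ)) ω ∂μ = (μ s).toReal := by
  constructor
  · exact (integrable_const (1 : ℝ)).indicator hs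
  · rw [integral_indicator_const _ hs]; simp; rfl

/-- If `Xₙ → X` and `Yₙ → Y` w.r.t. the pseudo-distance
`d̂_t⁺(X,Y) = E[esssup_{F_t}((X−Y)⁺) ∧ 1]`, then for any nonnegative
`F_t`-measurable random variable `α_t`, the sequence `(α_t Xₙ)` converges to
`α_t X` w.r.t. `d̂_t⁺`. -/
theorem dhat_tendsto_smul_of_tendsto {Ω : Type*} {m0 : MeasurableSpace Ω}
    (μ : Measure Ω) [IsProbabilityMeasure μ]
    (m : MeasurableSpace Ω) (hm : m ≤ m0)
    (es : (Ω → ℝ) → Ω → ℝ)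
    (hes : ∀ X : Ω → ℝ, (∀ ω, X ω ∈ Set.Icc (0 : ℝ) 1) → IsCondEssSup m μ X (es X))
    (X Y : Ω → ℝ) (Xn Yn : ℕ → Ω → ℝ)
    (hXmeas : Measurable[m0] X) (hXnmeas : ∀ n, Measurable[m0] (Xn n))
    (hx : Tendsto (fun n => dhat μ es X (Xn n)) atTop (nhds 0))
    (hy : Tendsto (fun n => dhat μ es Y (Yn n)) atTop (nhds 0))
    (αt : Ω → ℝ) (hαt : Measurable[m] αt) (hαt0 : ∀ ω, 0 ≤ αt ω) :
    Tendsto (fun n => dhat μ es (fun ω => αt ω * X ω) (fun ω => αt ω * Xn n ω))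
      atTop (nhds 0) := by
  classical
  set β : Ω → ℝ := fun ω => max (αt ω) 1 with hβdef
  have hβmeas : Measurable[m] β := hαt.max measurable_const
  have hβ1 : ∀ ω, (1 : ℝ) ≤ β ω := fun ω => le_max_right _ _
  have hβ0 : ∀ ω, (0 : ℝ) ≤ β ω := fun ω => zero_le_one.trans (hβ1 ω)
  set Z : ℕ → Ω → ℝ := fun n ω => min (max (X ω - Xn n ω) 0) 1 with hZdef
  set W : ℕ → Ω → ℝ := fun n ω =>
    min (max (αt ω * X ω - αt ω * Xn n ω) 0) 1 with hWdef
  have hZmem : ∀ n ω, Z n ω ∈ Set.Icc (0 : ℝ) 1 :=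
    fun n ω => ⟨le_min (le_max_right _ _) zero_le_one, min_le_right _ _⟩
  have hWmem : ∀ n ω, W n ω ∈ Set.Icc (0 : ℝ) 1 :=
    fun n ω => ⟨le_min (le_max_right _ _) zero_le_one, min_le_right _ _⟩
  have hesZ : ∀ n, IsCondEssSup m μ (Z n) (es (Z n)) := fun n => hes _ (hZmem n)
  have hesW : ∀ n, IsCondEssSup m μ (W n) (es (W n)) := fun n => hes _ (hWmem n)
  -- a.e. nonnegativity of the conditional ess sups
  have hZes0 : ∀ n, ∀ᵐ ω ∂μ, 0 ≤ es (Z n) ω := by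
    intro n
    filter_upwards [(hesZ n).2.1] with ω h
    exact ((hZmem n ω).1).trans h
  have hWes0 : ∀ n, ∀ᵐ ω ∂μ, 0 ≤ es (W n) ω := by
    intro n
    filter_upwards [(hesW n).2.1] with ω h
    exact ((hWmem n ω).1).trans h
  -- key domination: es (W n) ≤ β * es (Z n) a.e.
  have hWleβ : ∀ n, ∀ᵐ ω ∂μ, es (W n) ω ≤ β ω * es (Z n) ω := by
    intro n
    refine (hesW n).2.2 _ (hβmeas.mul (hesZ n).1) ?_
    filter_upwards [(hesZ n).2.1] with ω h
    calc W n ω = min (max (αt ω * (X ω - Xn n ω)) 0) 1 := by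
          rw [hWdef]; ring_nf
      _ ≤ β ω * Z n ω := aux_min_max_mul _ _ (hαt0 ω)
      _ ≤ β ω * es (Z n) ω := mul_le_mul_of_nonneg_left h (hβ0 ω)
  -- the exceptional sets
  set A : ℕ → Set Ω := fun M => {ω | (M : ℝ) + 1 < β ω} with hAdef
  have hAmeas : ∀ M, MeasurableSet[m0] (A M) := by
    intro M
    exact hm _ (measurableSet_lt measurable_const hβmeas)
  -- the a.e. pointwise bound on the integrands
  have hkey : ∀ (M : ℕ) (n : ℕ), ∀ᵐ ω ∂μ,
      min (es (W n) ω) 1 ≤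
        ((M : ℝ) + 1) * min (es (Z n) ω) 1 + (A M).indicator (fun _ => (1 : ℝ)) ω := by
    intro M n
    filter_upwards [hWleβ n, hZes0 n] with ω h1 h2
    have hM1 : (0 : ℝ) ≤ (M : ℝ) + 1 := by positivity
    have hmin0 : (0 : ℝ) ≤ min (es (Z n) ω) 1 := le_min h2 zero_le_one
    by_cases hω : ω ∈ A M
    · rw [Set.indicator_of_mem hω]
      have : min (es (W n) ω) 1 ≤ 1 := min_le_right _ _
      nlinarith [mul_nonneg hM1 hmin0]
    · rw [Set.indicator_of_notMem hω, add_zero]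
      have hβM : β ω ≤ (M : ℝ) + 1 := le_of_not_gt hω
      rcases le_or_gt (es (Z n) ω) 1 with h3 | h3
      · rw [min_eq_left h3]
        calc min (es (W n) ω) 1 ≤ min (β ω * es (Z n) ω) 1 := min_le_min h1 le_rfl
          _ ≤ β ω * es (Z n) ω := min_le_left _ _
          _ ≤ ((M : ℝ) + 1) * es (Z n) ω := mul_le_mul_of_nonneg_right hβM h2
      · rw [min_eq_right h3.le, mul_one]
        calc min (es (W n) ω) 1 ≤ 1 := min_le_right _ _
          _ ≤ (M : ℝ) + 1 := by linarith [Nat.cast_nonneg (α := ℝ) M]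
  -- integrability
  have hintW : ∀ n, Integrable (fun ω => min (es (W n) ω) 1) μ := by
    intro n
    have hWm0 : Measurable[m0] (es (W n)) := (hesW n).1.mono hm le_rfl
    refine (integrable_const (1 : ℝ)).mono'
      ((hWm0.min (measurable_const : Measurable[m0] fun _ : Ω => (1:ℝ))).aestronglyMeasurable) ?_
    filter_upwards [hWes0 n] with ω h
    rw [Real.norm_eq_abs, abs_le]
    exact ⟨by linarith [le_min h (zero_le_one (α := ℝ))], min_le_right _ _⟩
  have hintZ : ∀ n, Integrable (fun ω => min (es (Z n) ω) 1) μ := by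
    intro n
    have hZm0 : Measurable[m0] (es (Z n)) := (hesZ n).1.mono hm le_rfl
    refine (integrable_const (1 : ℝ)).mono'
      ((hZm0.min (measurable_const : Measurable[m0] fun _ : Ω => (1:ℝ))).aestronglyMeasurable) ?_
    filter_upwards [hZes0 n] with ω h
    rw [Real.norm_eq_abs, abs_le]
    exact ⟨by linarith [le_min h (zero_le_one (α := ℝ))], min_le_right _ _⟩
  have hintInd : ∀ M, Integrable ((A M).indicator (fun _ => (1 : ℝ))) μ :=
    fun M => (aux_indicator_int μ (hAmeas M)).1
  -- identify the dhat's
  have hdW : ∀ n, dhat μ es (fun ω => αt ω * X ω) (fun ω => αt ω * Xn n ω)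
      = ∫ ω, min (es (W n) ω) 1 ∂μ := fun n => rfl
  have hdZ : ∀ n, dhat μ es X (Xn n) = ∫ ω, min (es (Z n) ω) 1 ∂μ := fun n => rfl
  -- nonnegativity of dhats
  have hdW0 : ∀ n, 0 ≤ dhat μ es (fun ω => αt ω * X ω) (fun ω => αt ω * Xn n ω) := by
    intro n
    rw [hdW]
    refine integral_nonneg_of_ae ?_
    filter_upwards [hWes0 n] with ω h
    exact le_min h zero_le_one
  -- main bound
  have hbound : ∀ (M : ℕ) (n : ℕ),
      dhat μ es (fun ω => αt ω * X ω) (fun ω => αt ω * Xn n ω) ≤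
        ((M : ℝ) + 1) * dhat μ es X (Xn n) + (μ (A M)).toReal := by
    intro M n
    rw [hdW, hdZ]
    calc ∫ ω, min (es (W n) ω) 1 ∂μ
        ≤ ∫ ω, (((M : ℝ) + 1) * min (es (Z n) ω) 1
            + (A M).indicator (fun _ => (1 : ℝ)) ω) ∂μ := by
          refine integral_mono_ae (hintW n) (((hintZ n).const_mul _).add (hintInd M)) ?_
          exact hkey M n
      _ = ((M : ℝ) + 1) * ∫ ω, min (es (Z n) ω) 1 ∂μ + (μ (A M)).toReal := by
          rw [integral_add ((hintZ n).const_mul _) (hintInd M), integral_const_mul,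
            (aux_indicator_int μ (hAmeas M)).2]
  -- the measure of A M tends to 0
  have hAanti : Antitone A := by
    intro M M' hMM' ω hω
    simp only [hAdef, Set.mem_setOf_eq] at hω ⊢
    have : (M : ℝ) ≤ (M' : ℝ) := Nat.cast_le.mpr hMM'
    linarith
  have hAiInter : (⋂ M, A M) = ∅ := by
    ext ω
    simp only [Set.mem_iInter, Set.mem_empty_iff_false, iff_false, not_forall]
    obtain ⟨M, hM⟩ := exists_nat_ge (β ω)
    exact ⟨M, by simp only [hAdef, Set.mem_setOf_eq]; push_neg; linarith⟩
  have hAten : Tendsto (fun M => μ (A M)) atTop (nhds 0) := by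
    have := tendsto_measure_iInter_atTop (μ := μ) (s := A)
      (fun M => (hAmeas M).nullMeasurableSet) hAanti ⟨0, measure_ne_top μ _⟩
    rwa [hAiInter, measure_empty] at this
  have hAtenR : Tendsto (fun M => (μ (A M)).toReal) atTop (nhds 0) := by
    have h0 : (0 : ENNReal) ≠ ⊤ := by simp
    simpa [Function.comp_def] using (ENNReal.tendsto_toReal h0).comp hAten
  -- conclusion
  rw [Metric.tendsto_atTop]
  intro ε hε
  obtain ⟨M, hM⟩ : ∃ M, (μ (A M)).toReal < ε / 2 :=
    ((hAtenR.eventually (gt_mem_nhds (half_pos hε))).exists)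
  have hM1pos : (0 : ℝ) < (M : ℝ) + 1 := by positivity
  obtain ⟨N, hN⟩ := (Metric.tendsto_atTop.mp hx) (ε / (2 * ((M : ℝ) + 1)))
    (by positivity)
  refine ⟨N, fun n hn => ?_⟩
  have h3 := hN n hn
  rw [Real.dist_0_eq_abs] at h3 ⊢
  rw [abs_of_nonneg (hdW0 n)]
  have h4 : dhat μ es X (Xn n) < ε / (2 * ((M : ℝ) + 1)) := lt_of_abs_lt h3
  calc dhat μ es (fun ω => αt ω * X ω) (fun ω => αt ω * Xn n ω)
      ≤ ((M : ℝ) + 1) * dhat μ es X (Xn n) + (μ (A M)).toReal := hbound M n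
    _ < ((M : ℝ) + 1) * (ε / (2 * ((M : ℝ) + 1))) + ε / 2 := by
        exact add_lt_add (mul_lt_mul_of_pos_left h4 hM1pos) hM
    _ = ε := by field_simp; ring
end

section
/- Let τ be a stopping time taking finitely many values t₁ < t₂ < ⋯ < tₙ. Then for any real-valued random variable X and each i, esssup_{F_τ}(X · 1_{τ = tᵢ}) = esssup_{F_{tᵢ}}(X) · 1_{τ = tᵢ} almost surely. -/
open MeasureTheory Filter

/-- Let `τ` be a stopping time taking finitely many values. For
any random variable `X` and any value `t` of `τ`,
`esssup_{F_τ}(X · 1_{τ = t}) = esssup_{F_t}(X) · 1_{τ = t}` almost surely. -/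
theorem condEssSup_stoppingTime_indicator {Ω : Type*} {m0 : MeasurableSpace Ω}
    (f : Filtration ℝ m0) (μ : Measure Ω) [IsProbabilityMeasure μ]
    (τ : Ω → ℝ) (hτ : IsStoppingTime f (fun ω => (τ ω : WithTop ℝ))) (hfin : (Set.range τ).Finite)
    (X : Ω → ℝ) (hXmeas : Measurable X)
    (t : ℝ) (ht : t ∈ Set.range τ)
    (Y₁ Y₂ : Ω → ℝ)
    (hY₁ : IsCondEssSup hτ.measurableSpace μ
      (fun ω => if τ ω = t then X ω else 0) Y₁)
    (hY₂ : IsCondEssSup (f t) μ X Y₂) :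
    ∀ᵐ ω ∂μ, Y₁ ω = if τ ω = t then Y₂ ω else 0 := by
  obtain ⟨Y₁meas, hle₁, hmin₁⟩ := hY₁
  obtain ⟨Y₂meas, hle₂, hmin₂⟩ := hY₂
  have hE : MeasurableSet[f t] {ω | τ ω = t} :=
    by simpa using hτ.measurableSet_eq_of_countable_range (Set.Countable.mono (by rintro _ ⟨ω, rfl⟩; exact ⟨τ ω, ⟨ω, rfl⟩, rfl⟩) (hfin.countable.image (fun x : ℝ => (x : WithTop ℝ)))) t
  have hE' : MeasurableSet[hτ.measurableSpace] {ω | τ ω = t} :=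
    by simpa using hτ.measurableSet_eq_of_countable_range' (Set.Countable.mono (by rintro _ ⟨ω, rfl⟩; exact ⟨τ ω, ⟨ω, rfl⟩, rfl⟩) (hfin.countable.image (fun x : ℝ => (x : WithTop ℝ)))) t
  set W : Ω → ℝ := fun ω => if τ ω = t then Y₂ ω else 0 with hW
  -- `W` is `F_τ`-measurable
  have hWmeas : Measurable[hτ.measurableSpace] W := by
    intro B hB
    have hbase : MeasurableSet[hτ.measurableSpace] (Y₂ ⁻¹' B ∩ {ω | τ ω = t}) :=
      by have := (hτ.measurableSet_inter_eq_iff (Y₂ ⁻¹' B) t).mpr (by rw [(show {ω | ((τ ω : ℝ) : WithTop ℝ) = (t : WithTop ℝ)} = {ω | τ ω = t} by ext; simp)]; exact (Y₂meas hB).inter hE); rwa [(show {ω | ((τ ω : ℝ) : WithTop ℝ) = (t : WithTop ℝ)} = {ω | τ ω = t} by ext; simp)] at this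
    by_cases h0 : (0 : ℝ) ∈ B
    · have hpre : W ⁻¹' B = (Y₂ ⁻¹' B ∩ {ω | τ ω = t}) ∪ ({ω | τ ω = t})ᶜ := by
        ext ω
        by_cases h : τ ω = t <;> simp [W, h, h0]
      rw [hpre]
      exact hbase.union hE'.compl
    · have hpre : W ⁻¹' B = Y₂ ⁻¹' B ∩ {ω | τ ω = t} := by
        ext ω
        by_cases h : τ ω = t <;> simp [W, h, h0]
      rw [hpre]
      exact hbase
  -- `W` dominates the truncated variable
  have hWle : ∀ᵐ ω ∂μ, (if τ ω = t then X ω else 0) ≤ W ω := by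
    filter_upwards [hle₂] with ω hω
    by_cases h : τ ω = t <;> simp [W, h, hω]
  -- `W` is minimal among `F_τ`-measurable a.e. upper bounds
  have hWmin : ∀ Z : Ω → ℝ, Measurable[hτ.measurableSpace] Z →
      (∀ᵐ ω ∂μ, (if τ ω = t then X ω else 0) ≤ Z ω) → ∀ᵐ ω ∂μ, W ω ≤ Z ω := by
    intro Z hZmeas hZle
    set Z' : Ω → ℝ := fun ω => if τ ω = t then Z ω else Y₂ ω with hZ'
    have hZ'meas : Measurable[f t] Z' := by
      intro B hB
      have hpre : Z' ⁻¹' B = (Z ⁻¹' B ∩ {ω | τ ω = t}) ∪ (Y₂ ⁻¹' B ∩ {ω | τ ω = t}ᶜ) := by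
        ext ω; by_cases h : τ ω = t <;> simp [Z', h]
      rw [hpre]
      refine MeasurableSet.union ?_ ((Y₂meas hB).inter hE.compl)
      have := (hτ.measurableSet_inter_eq_iff (Z ⁻¹' B) t).mp (by rw [(show {ω | ((τ ω : ℝ) : WithTop ℝ) = (t : WithTop ℝ)} = {ω | τ ω = t} by ext; simp)]; exact (hZmeas hB).inter hE'); rwa [(show {ω | ((τ ω : ℝ) : WithTop ℝ) = (t : WithTop ℝ)} = {ω | τ ω = t} by ext; simp)] at this
    have hXZ' : ∀ᵐ ω ∂μ, X ω ≤ Z' ω := by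
      filter_upwards [hZle, hle₂] with ω h1 h2
      by_cases h : τ ω = t <;> simp_all [Z']
    have hY₂Z' := hmin₂ Z' hZ'meas hXZ'
    filter_upwards [hY₂Z', hZle] with ω h1 h2
    by_cases h : τ ω = t <;> simp_all [W, Z']
  have h1 := hmin₁ W hWmeas hWle
  have h2 := hWmin Y₁ Y₁meas hle₁
  filter_upwards [h1, h2] with ω ha hb
  exact le_antisymm ha hb
end

section
/- Let (F_t)_{t∈[0,T]} be a right-continuous filtration and τ a stopping time with values in [0,T]. Define τⁿ by discretizing τ upward on the dyadic grid: τⁿ(ω) = T(i+1)/2ⁿ where i is such that Ti/2ⁿ < τ(ω) ≤ T(i+1)/2ⁿ (with τⁿ = T/2ⁿ when τ ≤ T/2ⁿ). Then each τⁿ is a stopping time taking finitely many values, (τⁿ) is non-increasing and converges to τ, and for any X ∈ L⁰(ℝ, F_T), esssup_{F_τ}(X) = limₙ ↑ esssup_{F_{τⁿ}}(X) almost surely. -/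
open MeasureTheory Filter

/-- The σ-algebra `F_σ` of a random time `σ` (for a stopping time this set
system is already a σ-algebra, so generating changes nothing). -/
def stoppedSigma {Ω : Type*} {m0 : MeasurableSpace Ω} (f : Filtration ℝ m0)
    (σ : Ω → ℝ) : MeasurableSpace Ω :=
  MeasurableSpace.generateFrom
    {A : Set Ω | ∀ t : ℝ, MeasurableSet[f t] (A ∩ {ω | σ ω ≤ t})}

lemma stoppedSigma_eq_measurableSpace {Ω : Type*} {m0 : MeasurableSpace Ω} (f : Filtration ℝ m0)
    {σ : Ω → ℝ} (hσ : IsStoppingTime f (fun ω => (σ ω : WithTop ℝ))) :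
    stoppedSigma f σ = hσ.measurableSpace := by
  have h : {A : Set Ω | ∀ t : ℝ, MeasurableSet[f t] (A ∩ {ω | σ ω ≤ t})}
      = {A : Set Ω | MeasurableSet[hσ.measurableSpace] A} := by
    ext A
    simp only [Set.mem_setOf_eq, hσ.measurableSet, WithTop.coe_le_coe]
    refine ⟨fun hA => ⟨?_, hA⟩, fun hA => hA.2⟩
    have hU : A = ⋃ n : ℕ, A ∩ {ω | σ ω ≤ n} := by
      ext ω; simp only [Set.mem_iUnion, Set.mem_inter_iff, Set.mem_setOf_eq]
      exact ⟨fun h => let ⟨n, hn⟩ := exists_nat_ge (σ ω); ⟨n, h, hn⟩, fun ⟨_, h, _⟩ => h⟩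
    rw [hU]
    exact MeasurableSet.iUnion fun n =>
      le_iSup (fun t => (f t : MeasurableSpace Ω)) (n:ℝ) _ (hA n)
  rw [stoppedSigma, h, @MeasurableSpace.generateFrom_measurableSet Ω hσ.measurableSpace]

/-- Let `(F_t)` be right-continuous and `τ` a `[0,T]`-valued
stopping time. Discretize τ upward on the dyadic grid:
`τⁿ(ω) = T·(max 1 ⌈2ⁿ τ(ω)/T⌉)/2ⁿ`. Then each `τⁿ` is a finite-valued
stopping time, `(τⁿ)` is non-increasing and converges to `τ`, and for any
`X ∈ L⁰(ℝ, F_T)`, `esssup_{F_τ}(X) = limₙ ↑ esssup_{F_{τⁿ}}(X)` a.s. -/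
theorem condEssSup_dyadic_approx_stoppingTime {Ω : Type*} {m0 : MeasurableSpace Ω}
    (f : Filtration ℝ m0) (μ : Measure Ω) [IsProbabilityMeasure μ]
    (hright : ∀ t : ℝ, (f t : MeasurableSpace Ω) =
      ⨅ u ∈ Set.Ioi t, (f u : MeasurableSpace Ω))
    (T : ℝ) (hT : 0 < T)
    (τ : Ω → ℝ) (hτ : IsStoppingTime f (fun ω => (τ ω : WithTop ℝ))) (hτT : ∀ ω, τ ω ∈ Set.Icc 0 T)
    (τn : ℕ → Ω → ℝ)
    (hτn : ∀ n ω, τn n ω =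
      T * ((max 1 (Int.ceil (2 ^ n * τ ω / T)) : ℤ) : ℝ) / 2 ^ n) :
    (∀ n, IsStoppingTime f (fun ω => (τn n ω : WithTop ℝ)) ∧ (Set.range (τn n)).Finite) ∧
    (∀ ω, Antitone fun n => τn n ω) ∧
    (∀ ω, Tendsto (fun n => τn n ω) atTop (nhds (τ ω))) ∧
    (∀ (X Y : Ω → ℝ) (Yn : ℕ → Ω → ℝ), Measurable X →
      IsCondEssSup hτ.measurableSpace μ X Y →
      (∀ n, IsCondEssSup (stoppedSigma f (τn n)) μ X (Yn n)) →
      ∀ᵐ ω ∂μ, Monotone (fun n => Yn n ω) ∧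
        Tendsto (fun n => Yn n ω) atTop (nhds (Y ω))) := by
  have h2 : ∀ n : ℕ, (0:ℝ) < 2 ^ n := fun n => by positivity
  -- lower bound τ ≤ τn
  have hlb : ∀ (n : ℕ) ω, τ ω ≤ τn n ω := by
    intro n ω
    rw [hτn]
    have hy : (2:ℝ)^n * τ ω / T ≤ ((max 1 ⌈2^n * τ ω / T⌉ : ℤ) : ℝ) :=
      le_trans (Int.le_ceil _) (by exact_mod_cast le_max_right (1:ℤ) _)
    have heq : T * ((2:ℝ)^n * τ ω / T) / 2^n = τ ω := by
      field_simp
    refine le_trans (le_of_eq heq.symm) ?_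
    gcongr
  -- upper bound τn ≤ τ + T/2^n
  have hub : ∀ (n : ℕ) ω, τn n ω ≤ τ ω + T / 2^n := by
    intro n ω
    rw [hτn]
    have hy0 : (0:ℝ) ≤ 2^n * τ ω / T := by
      have := (hτT ω).1; positivity
    have hle : ((max 1 ⌈2^n * τ ω / T⌉ : ℤ) : ℝ) ≤ 2^n * τ ω / T + 1 := by
      push_cast
      apply max_le
      · linarith
      · exact (Int.ceil_lt_add_one _).le
    have heq : τ ω + T / 2^n = T * ((2:ℝ)^n * τ ω / T + 1) / 2^n := by
      field_simp
    rw [heq]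
    gcongr
  -- antitone
  have hanti : ∀ ω, Antitone fun n => τn n ω := by
    intro ω
    apply antitone_nat_of_succ_le
    intro n
    rw [hτn, hτn]
    set y : ℝ := 2^n * τ ω / T with hy
    have h2y : (2:ℝ)^(n+1) * τ ω / T = 2*y := by rw [hy]; ring
    rw [h2y]
    have hkey : max 1 ⌈2*y⌉ ≤ 2 * max 1 ⌈y⌉ := by
      have hm1 := le_max_left (1:ℤ) ⌈y⌉
      have hm2 := le_max_right (1:ℤ) ⌈y⌉
      have hcc : ⌈2*y⌉ ≤ 2 * ⌈y⌉ := by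
        apply Int.ceil_le.mpr
        push_cast
        linarith [Int.le_ceil y]
      exact max_le (by omega) (by omega)
    have hkey' : ((max 1 ⌈2*y⌉ : ℤ) : ℝ) ≤ ((2 * max 1 ⌈y⌉ : ℤ) : ℝ) := by exact_mod_cast hkey
    calc T * ((max 1 ⌈2*y⌉ : ℤ) : ℝ) / 2^(n+1)
        ≤ T * ((2 * max 1 ⌈y⌉ : ℤ) : ℝ) / 2^(n+1) := by gcongr
      _ = T * ((max 1 ⌈y⌉ : ℤ) : ℝ) / 2^n := by push_cast; field_simp; ring
  -- stopping time
  have hst : ∀ n, IsStoppingTime f (fun ω => (τn n ω : WithTop ℝ)) := by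
    intro n t
    simp only [WithTop.coe_le_coe]
    set m : ℤ := ⌊2^n * t / T⌋ with hm
    have key : ∀ ω, τn n ω ≤ t ↔ (1 ≤ m ∧ τ ω ≤ T * m / 2^n) := by
      intro ω
      rw [hτn]
      constructor
      · intro h
        have h1 : ((max 1 ⌈2^n * τ ω / T⌉ : ℤ) : ℝ) ≤ 2^n * t / T := by
          rw [div_le_iff₀ (h2 n)] at h
          rw [le_div_iff₀ hT]
          linarith
        have h2' : max 1 ⌈2^n * τ ω / T⌉ ≤ m := Int.le_floor.mpr h1
        refine ⟨le_trans (le_max_left _ _) h2', ?_⟩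
        have h4 : 2^n * τ ω / T ≤ (m:ℝ) := Int.ceil_le.mp (le_trans (le_max_right _ _) h2')
        rw [le_div_iff₀ (h2 n)]
        rw [div_le_iff₀ hT] at h4
        linarith
      · rintro ⟨hm1, hm2⟩
        have h4 : 2^n * τ ω / T ≤ (m:ℝ) := by
          rw [div_le_iff₀ hT]
          rw [le_div_iff₀ (h2 n)] at hm2
          linarith
        have h6 : ((max 1 ⌈2^n * τ ω / T⌉ : ℤ) : ℝ) ≤ (m:ℝ) := by
          exact_mod_cast max_le hm1 (Int.ceil_le.mpr h4)
        have h7 : (m:ℝ) ≤ 2^n * t / T := Int.floor_le _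
        rw [div_le_iff₀ (h2 n)]
        rw [le_div_iff₀ hT] at h7
        nlinarith [mul_le_mul_of_nonneg_left h6 hT.le]
    by_cases h1 : 1 ≤ m
    · have hset : {ω | τn n ω ≤ t} = {ω | τ ω ≤ T * m / 2^n} :=
        Set.ext fun ω => by simp [key ω, h1]
      have hmt : T * m / 2^n ≤ t := by
        have h7 : (m:ℝ) ≤ 2^n * t / T := Int.floor_le _
        rw [le_div_iff₀ hT] at h7
        rw [div_le_iff₀ (h2 n)]
        linarith
      rw [hset]
      exact f.mono hmt _ (by simpa only [WithTop.coe_le_coe] using hτ (T * m / 2^n))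
    · have hset : {ω | τn n ω ≤ t} = ∅ := by
        ext ω; simp [key ω, h1]
      rw [hset]
      exact @MeasurableSet.empty _ (f t)
  -- finite range
  have hfin : ∀ n, (Set.range (τn n)).Finite := by
    intro n
    apply Set.Finite.subset ((Set.finite_Icc (1:ℤ) (2^n)).image (fun k : ℤ => T * k / 2^n))
    rintro x ⟨ω, rfl⟩
    refine ⟨max 1 ⌈2^n * τ ω / T⌉, ⟨le_max_left _ _, max_le ?_ ?_⟩, (hτn n ω).symm⟩
    · exact one_le_pow₀ (by norm_num)
    · apply Int.ceil_le.mpr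
      push_cast
      rw [div_le_iff₀ hT]
      have h3 := (hτT ω).2
      nlinarith [h2 n]
  -- convergence of τn
  have hT2 : Tendsto (fun n : ℕ => T / 2^n) atTop (nhds 0) := by
    have heq : (fun n : ℕ => T / 2^n) = fun n : ℕ => T * (1/2:ℝ)^n := by
      funext n; rw [one_div, inv_pow, div_eq_mul_inv]
    rw [heq]
    simpa using (tendsto_pow_atTop_nhds_zero_of_lt_one (by norm_num : (0:ℝ) ≤ 1/2)
      (by norm_num : (1/2:ℝ) < 1)).const_mul T
  have htend : ∀ ω, Tendsto (fun n => τn n ω) atTop (nhds (τ ω)) := by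
    intro ω
    refine tendsto_of_tendsto_of_tendsto_of_le_of_le (g := fun _ => τ ω)
      (h := fun n => τ ω + T / 2^n) tendsto_const_nhds ?_ (fun n => hlb n ω) (fun n => hub n ω)
    simpa using tendsto_const_nhds.add hT2
  refine ⟨fun n => ⟨hst n, hfin n⟩, hanti, htend, ?_⟩
  -- the conditional essential supremum part
  intro X Y Yn _hX hY hYn0
  obtain ⟨hYmeas, hXY, hYmin⟩ := hY
  have hYn : ∀ n, IsCondEssSup (hst n).measurableSpace μ X (Yn n) := fun n => by
    rw [← stoppedSigma_eq_measurableSpace f (hst n)]; exact hYn0 n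
  have hGmono : ∀ {m n : ℕ}, m ≤ n →
      (hst n).measurableSpace ≤ (hst m).measurableSpace := fun {m n} h =>
    IsStoppingTime.measurableSpace_mono (hst n) (hst m) (fun ω => WithTop.coe_le_coe.mpr (hanti ω h))
  have hFG : ∀ n, hτ.measurableSpace ≤ (hst n).measurableSpace := fun n =>
    IsStoppingTime.measurableSpace_mono hτ (hst n) (fun ω => WithTop.coe_le_coe.mpr (hlb n ω))
  -- intersection of the discrete σ-algebras is contained in F_τ
  have hinter : ∀ A : Set Ω, (∀ m : ℕ, MeasurableSet[(hst m).measurableSpace] A) →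
      MeasurableSet[hτ.measurableSpace] A := by
    intro A hA
    refine (hτ.measurableSet A).mpr ⟨(((hst 0).measurableSet A).mp (hA 0)).1, fun t => ?_⟩
    simp only [WithTop.coe_le_coe]
    have hlt : ∀ u : ℝ, MeasurableSet[f u] (A ∩ {ω | τ ω < u}) := by
      intro u
      have hU : A ∩ {ω | τ ω < u} = ⋃ m : ℕ, (A ∩ {ω | τn m ω ≤ u}) ∩ {ω | τ ω < u} := by
        ext ω
        simp only [Set.mem_inter_iff, Set.mem_iUnion, Set.mem_setOf_eq]
        constructor
        · rintro ⟨hA', hlt'⟩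
          obtain ⟨m, hm⟩ := (hT2.eventually (gt_mem_nhds (by linarith : (0:ℝ) < u - τ ω))).exists
          exact ⟨m, ⟨hA', by linarith [hub m ω]⟩, hlt'⟩
        · rintro ⟨m, ⟨hA', _⟩, h⟩
          exact ⟨hA', h⟩
      rw [hU]
      exact MeasurableSet.iUnion fun m =>
        (show MeasurableSet[f u] (A ∩ {ω | τn m ω ≤ u}) by
          simpa only [WithTop.coe_le_coe] using (hA m).2 u).inter
          (by simpa only [WithTop.coe_lt_coe] using hτ.measurableSet_lt u)
    rw [hright t]
    refine MeasurableSpace.measurableSet_iInf.mpr fun u =>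
      MeasurableSpace.measurableSet_iInf.mpr fun hu => ?_
    have htu : t < u := hu
    have hEq : A ∩ {ω | τ ω ≤ t} = (A ∩ {ω | τ ω < u}) ∩ {ω | τ ω ≤ t} := by
      ext ω
      simp only [Set.mem_inter_iff, Set.mem_setOf_eq]
      exact ⟨fun ⟨h1, h3⟩ => ⟨⟨h1, lt_of_le_of_lt h3 htu⟩, h3⟩, fun ⟨⟨h1, _⟩, h3⟩ => ⟨h1, h3⟩⟩
    rw [hEq]
    exact (hlt u).inter (f.mono htu.le _ (by simpa only [WithTop.coe_le_coe] using hτ.measurableSet_le t))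
  have hmono_ae : ∀ n, ∀ᵐ ω ∂μ, Yn n ω ≤ Yn (n+1) ω := fun n =>
    (hYn n).2.2 (Yn (n+1)) ((hYn (n+1)).1.mono (hGmono (Nat.le_succ n)) le_rfl) (hYn (n+1)).2.1
  have hbd_ae : ∀ n, ∀ᵐ ω ∂μ, Yn n ω ≤ Y ω := fun n =>
    (hYn n).2.2 Y (hYmeas.mono (hFG n) le_rfl) hXY
  obtain ⟨Z, hZdef⟩ : ∃ Z : Ω → ℝ,
      Z = fun ω => (limsup (fun n => ((Yn n ω : ℝ) : EReal)) atTop).toReal := ⟨_, rfl⟩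
  have hZm : ∀ m : ℕ, Measurable[(hst m).measurableSpace] Z := by
    intro m
    have h1 : ∀ n : ℕ, Measurable[(hst m).measurableSpace]
        fun ω => ((Yn (n + m) ω : ℝ) : EReal) := fun n =>
      measurable_coe_real_ereal.comp ((hYn (n+m)).1.mono (hGmono (Nat.le_add_left m n)) le_rfl)
    have h3 : (fun ω => (limsup (fun n : ℕ => ((Yn n ω : ℝ) : EReal)) atTop).toReal)
        = fun ω => (limsup (fun n : ℕ => ((Yn (n + m) ω : ℝ) : EReal)) atTop).toReal :=
      funext fun ω => by rw [limsup_nat_add (fun n => ((Yn n ω : ℝ) : EReal)) m]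
    rw [hZdef, h3]
    exact measurable_ereal_toReal.comp (Measurable.limsup h1)
  have hZF : Measurable[hτ.measurableSpace] Z := by
    intro s hs
    exact hinter _ fun m => hZm m hs
  have hE : ∀ᵐ ω ∂μ, (∀ n, X ω ≤ Yn n ω) ∧ (∀ n, Yn n ω ≤ Yn (n+1) ω) ∧
      (∀ n, Yn n ω ≤ Y ω) :=
    ((ae_all_iff.mpr fun n => (hYn n).2.1).and
      ((ae_all_iff.mpr hmono_ae).and (ae_all_iff.mpr hbd_ae)))
  have hkey : ∀ᵐ ω ∂μ, (Monotone fun n => Yn n ω) ∧ X ω ≤ Z ω ∧ Z ω ≤ Y ω ∧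
      Tendsto (fun n => Yn n ω) atTop (nhds (Z ω)) := by
    filter_upwards [hE] with ω hω
    obtain ⟨h1, h2', h3⟩ := hω
    have hmono : Monotone fun n => Yn n ω := monotone_nat_of_le_succ h2'
    have hbdd : BddAbove (Set.range fun n => Yn n ω) :=
      ⟨Y ω, by rintro x ⟨n, rfl⟩; exact h3 n⟩
    have hconv : Tendsto (fun n => Yn n ω) atTop (nhds (⨆ n, Yn n ω)) :=
      tendsto_atTop_ciSup hmono hbdd
    have hconvE : Tendsto (fun n => ((Yn n ω : ℝ) : EReal)) atTop
        (nhds (((⨆ n, Yn n ω : ℝ)) : EReal)) :=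
      (continuous_coe_real_ereal.tendsto _).comp hconv
    have hLeq : limsup (fun n => ((Yn n ω : ℝ) : EReal)) atTop
        = (((⨆ n, Yn n ω : ℝ)) : EReal) := hconvE.limsup_eq
    have hZeq : Z ω = ⨆ n, Yn n ω := by rw [hZdef]; simp only [hLeq, EReal.toReal_coe]
    refine ⟨hmono, ?_, ?_, ?_⟩
    · rw [hZeq]; exact (h1 0).trans (le_ciSup hbdd 0)
    · rw [hZeq]; exact ciSup_le h3
    · rw [hZeq]; exact hconv
  have hYZ : ∀ᵐ ω ∂μ, Y ω ≤ Z ω := hYmin Z hZF (hkey.mono fun ω h => h.2.1)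
  filter_upwards [hkey, hYZ] with ω hω hYZ'
  obtain ⟨hm, _, hZY, ht⟩ := hω
  exact ⟨hm, by rwa [show Y ω = Z ω from le_antisymm hYZ' hZY]⟩
end

section
/- Suppose the pseudo-distance topology O_t induced by d̂_t⁺(X,Y) = E[esssup_{F_t}((X−Y)⁺) ∧ 1] is used to define continuous-time portfolios V^c_{t,T} as limits of convergent sequences of discrete-time portfolios V_{t,T}. If the AIP condition holds in discrete time at time t (i.e., essinf_{F_t}(v) ≤ 0 a.s. for every v ∈ V_{t,T}), then essinf_{F_t}(v^c) ≤ 0 a.s. for every v^c ∈ V^c_{t,T}, i.e., AIP holds in continuous time at time t. -/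
open MeasureTheory Filter Topology

/-- `I` is the `m`-conditional essential infimum of `X` under `μ`:
`m`-measurable, dominated by `X` a.s., and a.s. greater than any other
`m`-measurable random variable dominated by `X` a.s. -/
def IsCondEssInf {Ω : Type*} {mΩ : MeasurableSpace Ω} (m : MeasurableSpace Ω)
    (μ : @MeasureTheory.Measure Ω mΩ) (X I : Ω → ℝ) : Prop :=
  Measurable[m] I ∧ (∀ᵐ ω ∂μ, I ω ≤ X ω) ∧
    ∀ Z : Ω → ℝ, Measurable[m] Z → (∀ᵐ ω ∂μ, Z ω ≤ X ω) → ∀ᵐ ω ∂μ, Z ω ≤ I ω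

/-- The continuous-time portfolios: limits, for the pseudo-distance topology
`d̂_t⁺(X,Y) = E[esssup_{F_t}((X−Y)⁺) ∧ 1]`, of convergent sequences of
discrete-time portfolios.  `V^c` is such a limit iff there are `Vⁿ ∈ V` and
nonnegative `F_t`-measurable `αₙ → 0` in probability with `V^c ≤ Vⁿ + αₙ`. -/
def ContLimits {Ω : Type*} {mΩ : MeasurableSpace Ω} (μ : @MeasureTheory.Measure Ω mΩ)
    (m : MeasurableSpace Ω) (V : Set (Ω → ℝ)) : Set (Ω → ℝ) :=
  {vc | ∃ (Vn : ℕ → Ω → ℝ) (α : ℕ → Ω → ℝ),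
    (∀ n, Vn n ∈ V) ∧ (∀ n, Measurable[m] (α n)) ∧ (∀ n ω, 0 ≤ α n ω) ∧
    MeasureTheory.TendstoInMeasure μ α Filter.atTop 0 ∧
    ∀ n, ∀ᵐ ω ∂μ, vc ω ≤ Vn n ω + α n ω}

open Real in
/-- If a random variable `X` admits an `m`-measurable a.s. lower bound `L`, then the
`m`-conditional essential infimum of `X` exists.  Constructed as the essential supremum
of the family of `m`-measurable minorants, via a compactifying `arctan` transform. -/
lemma exists_condEssInf {Ω : Type*} {m0 : MeasurableSpace Ω}
    (μ : Measure Ω) [IsProbabilityMeasure μ]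
    (m : MeasurableSpace Ω) (hm : m ≤ m0) (X L : Ω → ℝ)
    (hLmeas : Measurable[m] L) (hLX : ∀ᵐ ω ∂μ, L ω ≤ X ω) :
    ∃ I, IsCondEssInf m μ X I := by
  classical
  set S : Set (Ω → ℝ) := {Z | Measurable[m] Z ∧ ∀ᵐ ω ∂μ, Z ω ≤ X ω} with hSdef
  have hLS : L ∈ S := ⟨hLmeas, hLX⟩
  have habs : ∀ x : ℝ, |Real.arctan x| ≤ π / 2 := fun x =>
    le_of_lt (abs_lt.2 ⟨Real.neg_pi_div_two_lt_arctan x, Real.arctan_lt_pi_div_two x⟩)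
  have hint : ∀ Z : Ω → ℝ, Measurable[m] Z →
      Integrable (fun ω => Real.arctan (Z ω)) μ := by
    intro Z hZ
    have hZ0 : Measurable[m0] (fun ω => Real.arctan (Z ω)) :=
      Real.continuous_arctan.measurable.comp (hZ.mono hm le_rfl)
    exact (integrable_const (π / 2)).mono' hZ0.aestronglyMeasurable
      (Filter.Eventually.of_forall fun ω => by
        simpa [Real.norm_eq_abs] using habs (Z ω))
  set F : (Ω → ℝ) → ℝ := fun Z => ∫ ω, Real.arctan (Z ω) ∂μ with hFdef
  have hFle : ∀ Z : Ω → ℝ, Measurable[m] Z → F Z ≤ π / 2 := by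
    intro Z hZ
    calc F Z ≤ ∫ _ω, π / 2 ∂μ :=
          integral_mono (hint Z hZ) (integrable_const _) fun ω => le_of_abs_le (habs _)
      _ = π / 2 := by simp
  have hne : (F '' S).Nonempty := ⟨F L, L, hLS, rfl⟩
  have hbdd : BddAbove (F '' S) := ⟨π / 2, by rintro _ ⟨Z, hZ, rfl⟩; exact hFle Z hZ.1⟩
  set s := sSup (F '' S) with hsdef
  obtain ⟨u, hu_mono, hu_tend, hu_mem⟩ := exists_seq_tendsto_sSup hne hbdd
  choose Z hZS hZF using hu_mem
  -- running maxima of the sequence `Z`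
  set M : ℕ → Ω → ℝ := fun k => Nat.rec (Z 0) (fun k Mk ω => max (Mk ω) (Z (k + 1) ω)) k
    with hMdef
  have hMmeas : ∀ k, Measurable[m] (M k) := by
    intro k; induction k with
    | zero => exact (hZS 0).1
    | succ k ih => exact ih.max (hZS (k + 1)).1
  have hMmono : ∀ ω, Monotone fun k => M k ω :=
    fun ω => monotone_nat_of_le_succ fun k => le_max_left _ _
  have hZM : ∀ k ω, Z k ω ≤ M k ω := by
    intro k ω; cases k with
    | zero => exact le_rfl
    | succ k => exact le_max_right _ _
  have hMX : ∀ k, ∀ᵐ ω ∂μ, M k ω ≤ X ω := by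
    intro k; induction k with
    | zero => exact (hZS 0).2
    | succ k ih =>
        filter_upwards [ih, (hZS (k + 1)).2] with ω h1 h2
        exact max_le h1 h2
  set g : Ω → ℝ := fun ω => ⨆ k, Real.arctan (M k ω) with hgdef
  have hbddg : ∀ ω, BddAbove (Set.range fun k => Real.arctan (M k ω)) := fun ω =>
    ⟨π / 2, by rintro _ ⟨k, rfl⟩; exact le_of_abs_le (habs _)⟩
  have hgtend : ∀ ω, Tendsto (fun k => Real.arctan (M k ω)) atTop (𝓝 (g ω)) := fun ω =>
    tendsto_atTop_ciSup (fun a b hab => Real.arctan_strictMono.monotone (hMmono ω hab))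
      (hbddg ω)
  have hgmeas : Measurable[m] g :=
    measurable_of_tendsto_metrizable
      (fun k => Real.continuous_arctan.measurable.comp (hMmeas k))
      (tendsto_pi_nhds.2 hgtend)
  have mtan : Measurable Real.tan := by
    have h : Real.tan = fun x => Real.sin x / Real.cos x := funext Real.tan_eq_sin_div_cos
    rw [h]; exact Real.measurable_sin.div Real.measurable_cos
  set I : Ω → ℝ := fun ω => Real.tan (g ω) with hIdef
  have hImeas : Measurable[m] I := mtan.comp hgmeas
  have hMXall : ∀ᵐ ω ∂μ, ∀ k, M k ω ≤ X ω := ae_all_iff.2 hMX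
  have hgIoo : ∀ᵐ ω ∂μ, g ω ∈ Set.Ioo (-(π / 2)) (π / 2) := by
    filter_upwards [hMXall] with ω hω
    refine ⟨lt_of_lt_of_le (Real.neg_pi_div_two_lt_arctan (M 0 ω)) (le_ciSup (hbddg ω) 0), ?_⟩
    exact lt_of_le_of_lt (ciSup_le fun k => Real.arctan_strictMono.monotone (hω k))
      (Real.arctan_lt_pi_div_two (X ω))
  have harctanI : ∀ᵐ ω ∂μ, Real.arctan (I ω) = g ω := by
    filter_upwards [hgIoo] with ω hω
    exact Real.arctan_tan hω.1 hω.2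
  have hIX : ∀ᵐ ω ∂μ, I ω ≤ X ω := by
    filter_upwards [hMXall, hgIoo] with ω hω hIoo
    have h1 : g ω ≤ Real.arctan (X ω) :=
      ciSup_le fun k => Real.arctan_strictMono.monotone (hω k)
    have h2 := Real.strictMonoOn_tan.monotoneOn hIoo (Real.arctan_mem_Ioo (X ω)) h1
    simpa [Real.tan_arctan] using h2
  have hMtendI : ∀ᵐ ω ∂μ, Tendsto (fun k => M k ω) atTop (𝓝 (I ω)) := by
    filter_upwards [hgIoo] with ω hIoo
    have hc : ContinuousAt Real.tan (g ω) :=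
      Real.continuousAt_tan.2 (Real.cos_pos_of_mem_Ioo hIoo).ne'
    have h := hc.tendsto.comp (hgtend ω)
    simpa [Function.comp_def, Real.tan_arctan] using h
  -- `∫ arctan I = s`
  have hFM_le : ∀ k, F (M k) ≤ s := fun k => le_csSup hbdd ⟨M k, ⟨hMmeas k, hMX k⟩, rfl⟩
  have hFM_ge : ∀ k, u k ≤ F (M k) := by
    intro k
    rw [← hZF k]
    exact integral_mono (hint _ (hZS k).1) (hint _ (hMmeas k))
      fun ω => Real.arctan_strictMono.monotone (hZM k ω)
  have hFMtend : Tendsto (fun k => F (M k)) atTop (𝓝 (∫ ω, Real.arctan (I ω) ∂μ)) := by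
    refine tendsto_integral_of_dominated_convergence (fun _ => π / 2)
      (fun k => (hint _ (hMmeas k)).aestronglyMeasurable) (integrable_const _)
      (fun k => Filter.Eventually.of_forall fun ω => by
        simpa [Real.norm_eq_abs] using habs (M k ω)) ?_
    filter_upwards [harctanI] with ω hω
    rw [hω]; exact hgtend ω
  have hFI : ∫ ω, Real.arctan (I ω) ∂μ = s :=
    le_antisymm (le_of_tendsto' hFMtend hFM_le)
      (le_of_tendsto_of_tendsto' hu_tend hFMtend hFM_ge)
  -- maximality
  refine ⟨I, hImeas, hIX, ?_⟩
  intro Z0 hZ0meas hZ0X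
  set W : Ω → ℝ := fun ω => max (Z0 ω) (I ω) with hWdef
  have hWmeas : Measurable[m] W := hZ0meas.max hImeas
  have hWk_le : ∀ k, F (fun ω => max (Z0 ω) (M k ω)) ≤ s := by
    intro k
    refine le_csSup hbdd ⟨_, ⟨hZ0meas.max (hMmeas k), ?_⟩, rfl⟩
    filter_upwards [hZ0X, hMX k] with ω h1 h2
    exact max_le h1 h2
  have hWtend : Tendsto (fun k => F (fun ω => max (Z0 ω) (M k ω))) atTop
      (𝓝 (∫ ω, Real.arctan (W ω) ∂μ)) := by
    refine tendsto_integral_of_dominated_convergence (fun _ => π / 2)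
      (fun k => (hint _ (hZ0meas.max (hMmeas k))).aestronglyMeasurable) (integrable_const _)
      (fun k => Filter.Eventually.of_forall fun ω => by
        simpa [Real.norm_eq_abs] using habs (max (Z0 ω) (M k ω))) ?_
    filter_upwards [hMtendI] with ω hω
    exact (Real.continuous_arctan.continuousAt.tendsto.comp
      (tendsto_const_nhds.max hω))
  have hW_le : ∫ ω, Real.arctan (W ω) ∂μ ≤ s := le_of_tendsto' hWtend hWk_le
  have hptle : ∀ ω, Real.arctan (I ω) ≤ Real.arctan (W ω) := fun ω =>
    Real.arctan_strictMono.monotone (le_max_right _ _)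
  have hintI : Integrable (fun ω => Real.arctan (I ω)) μ := hint _ hImeas
  have hintW : Integrable (fun ω => Real.arctan (W ω)) μ := hint _ hWmeas
  have hzero : ∫ ω, (Real.arctan (W ω) - Real.arctan (I ω)) ∂μ = 0 := by
    rw [integral_sub hintW hintI]
    have h1 : (0:ℝ) ≤ ∫ ω, (Real.arctan (W ω)) ∂μ - ∫ ω, (Real.arctan (I ω)) ∂μ := by
      have := integral_mono hintI hintW hptle
      linarith
    have h2 : ∫ ω, (Real.arctan (W ω)) ∂μ - ∫ ω, (Real.arctan (I ω)) ∂μ ≤ 0 := by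
      rw [hFI] at *; linarith
    linarith
  have haeeq : (fun ω => Real.arctan (W ω) - Real.arctan (I ω)) =ᵐ[μ] 0 :=
    (integral_eq_zero_iff_of_nonneg_ae
      (Filter.Eventually.of_forall fun ω => sub_nonneg.2 (hptle ω))
      (hintW.sub hintI)).1 hzero
  filter_upwards [haeeq] with ω hω
  have hWI : W ω = I ω := Real.arctan_injective (by
    have : Real.arctan (W ω) - Real.arctan (I ω) = 0 := hω
    linarith)
  have := le_max_left (Z0 ω) (I ω)
  rw [hWdef] at hWI
  simpa [hWI] using this

/-- If AIP holds in discrete time at time `t`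
(`essinf_{F_t}(v) ≤ 0` a.s. for every discrete-time portfolio `v ∈ V`), then
AIP holds in continuous time at time `t`: `essinf_{F_t}(v^c) ≤ 0` a.s. for
every continuous-time portfolio `v^c ∈ V^c`. -/
theorem AIP_discrete_implies_AIP_continuous {Ω : Type*} {m0 : MeasurableSpace Ω}
    (μ : Measure Ω) [IsProbabilityMeasure μ]
    (m : MeasurableSpace Ω) (hm : m ≤ m0)
    (V : Set (Ω → ℝ))
    (hAIP : ∀ v ∈ V, ∀ I : Ω → ℝ, IsCondEssInf m μ v I → ∀ᵐ ω ∂μ, I ω ≤ 0) :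
    ∀ vc ∈ ContLimits μ m V, ∀ I : Ω → ℝ,
      IsCondEssInf m μ vc I → ∀ᵐ ω ∂μ, I ω ≤ 0 := by
  intro vc hvc I hI
  obtain ⟨Vn, α, hVn, hαmeas, hαnn, hαtend, hle⟩ := hvc
  obtain ⟨hImeas, hIvc, hImax⟩ := hI
  have key : ∀ n, ∀ᵐ ω ∂μ, I ω ≤ α n ω := by
    intro n
    have hLmeas : Measurable[m] (fun ω => I ω - α n ω) := hImeas.sub (hαmeas n)
    have hL : ∀ᵐ ω ∂μ, I ω - α n ω ≤ Vn n ω := by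
      filter_upwards [hIvc, hle n] with ω h1 h2; linarith
    obtain ⟨J, hJmeas, hJle, hJmax⟩ :=
      exists_condEssInf μ m hm (Vn n) (fun ω => I ω - α n ω) hLmeas hL
    have h1 : ∀ᵐ ω ∂μ, I ω - α n ω ≤ J ω := hJmax _ hLmeas hL
    have h2 : ∀ᵐ ω ∂μ, J ω ≤ 0 := hAIP _ (hVn n) J ⟨hJmeas, hJle, hJmax⟩
    filter_upwards [h1, h2] with ω ha hb; linarith
  obtain ⟨ns, _, hns⟩ := hαtend.exists_seq_tendsto_ae
  have hall : ∀ᵐ ω ∂μ, ∀ k, I ω ≤ α (ns k) ω := ae_all_iff.2 fun k => key (ns k)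
  filter_upwards [hall, hns] with ω h1 h2
  simpa using ge_of_tendsto' h2 h1
end

section
/- Let h_T ∈ L⁰(ℝ, F_T) be a payoff. Let P_{t,T}(h_T) be the set of F_t-measurable p_t such that p_t + V ≥ h_T a.s. for some V ∈ V_{t,T}, and P^c_{t,T}(h_T) the analogous set with V ∈ V^c_{t,T}, where V^c_{t,T} is the set of limits of convergent sequences of V_{t,T} under the pseudo-distance d̂_t⁺(X,Y) = E[esssup_{F_t}((X−Y)⁺) ∧ 1]. Then the infimum super-hedging prices coincide: essinf P_{t,T}(h_T) = essinf P^c_{t,T}(h_T). -/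
open MeasureTheory Filter

/-- `I` is the essential infimum of the family `Ps` of random variables: it is
dominated a.s. by every member of `Ps`, and any random variable dominated a.s.
by every member of `Ps` is a.s. below `I`. -/
def IsEssInfFamily {Ω : Type*} {mΩ : MeasurableSpace Ω} (μ : @MeasureTheory.Measure Ω mΩ)
    (Ps : Set (Ω → ℝ)) (I : Ω → ℝ) : Prop :=
  (∀ p ∈ Ps, ∀ᵐ ω ∂μ, I ω ≤ p ω) ∧
    ∀ J : Ω → ℝ, (∀ p ∈ Ps, ∀ᵐ ω ∂μ, J ω ≤ p ω) → ∀ᵐ ω ∂μ, J ω ≤ I ω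

/-- The set of super-hedging prices of `h_T` using portfolios from `V`:
`F_t`-measurable `p_t` with `p_t + v ≥ h_T` a.s. for some `v ∈ V`. -/
def SuperHedgingPrices {Ω : Type*} {mΩ : MeasurableSpace Ω} (μ : @MeasureTheory.Measure Ω mΩ)
    (m : MeasurableSpace Ω) (V : Set (Ω → ℝ)) (hT : Ω → ℝ) : Set (Ω → ℝ) :=
  {p | Measurable[m] p ∧ ∃ v ∈ V, ∀ᵐ ω ∂μ, hT ω ≤ p ω + v ω}

/-- The infimum super-hedging prices of a payoff `h_T` in
discrete time and in continuous time coincide: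
`essinf P_{t,T}(h_T) = essinf P^c_{t,T}(h_T)` a.s. -/
theorem superhedging_prices_coincide {Ω : Type*} {m0 : MeasurableSpace Ω}
    (μ : Measure Ω) [IsProbabilityMeasure μ]
    (m : MeasurableSpace Ω) (hm : m ≤ m0)
    (V : Set (Ω → ℝ)) (hT : Ω → ℝ)
    (π πc : Ω → ℝ)
    (hπ : IsEssInfFamily μ (SuperHedgingPrices μ m V hT) π)
    (hπc : IsEssInfFamily μ (SuperHedgingPrices μ m (ContLimits μ m V) hT) πc) :
    ∀ᵐ ω ∂μ, π ω = πc ω := by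
  have hsub : V ⊆ ContLimits μ m V := by
    intro v hv
    refine ⟨fun _ => v, fun _ => 0, fun _ => hv, fun _ => measurable_const,
      fun _ _ => le_rfl, ?_, fun n => Filter.Eventually.of_forall (fun ω => by simp)⟩
    intro ε hε
    have heq : (fun _ : ℕ => μ {x | ε ≤ edist ((0 : Ω → ℝ) x) ((0 : Ω → ℝ) x)})
        = fun _ => 0 := by
      funext n
      convert measure_empty (μ := μ)
      ext x
      simp [hε.not_ge]
    rw [heq]
    exact tendsto_const_nhds
  have h1 : ∀ᵐ ω ∂μ, πc ω ≤ π ω := by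
    apply hπ.2
    intro p hp
    obtain ⟨hpm, v, hv, hle⟩ := hp
    exact hπc.1 p ⟨hpm, v, hsub hv, hle⟩
  have h2 : ∀ᵐ ω ∂μ, π ω ≤ πc ω := by
    apply hπc.2
    intro p hp
    obtain ⟨hpm, vc, ⟨Vn, α, hVn, hαm, hα0, hαtend, hle⟩, hhT⟩ := hp
    have key : ∀ n, ∀ᵐ ω ∂μ, π ω ≤ p ω + α n ω := by
      intro n
      have : (fun ω => p ω + α n ω) ∈ SuperHedgingPrices μ m V hT := by
        refine ⟨hpm.add (hαm n), Vn n, hVn n, ?_⟩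
        filter_upwards [hhT, hle n] with ω h1 h2
        linarith
      exact hπ.1 _ this
    obtain ⟨ns, hns, htendae⟩ := hαtend.exists_seq_tendsto_ae
    filter_upwards [ae_all_iff.2 (fun k => key (ns k)), htendae] with ω hω htω
    have hlim : Tendsto (fun k => p ω + α (ns k) ω) atTop (nhds (p ω)) := by
      have : Tendsto (fun k => α (ns k) ω) atTop (nhds 0) := by simpa using htω
      simpa using tendsto_const_nhds.add this
    exact ge_of_tendsto' hlim hω
  filter_upwards [h1, h2] with ω a b
  exact le_antisymm b a
end
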